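/- arXiv:2201.06650 — 4 statements merged into one kernel-verified Lean document; each statement's English description precedes it below -/
import Mathlib

section
/- (Rota's Galois Connection Theorem, functional form) Let P be a finite poset, Q any poset, and f : P ⇄ Q : g a Galois connection. Then for any function m : P → ℤ, the Möbius inversion of the pullback g♯m = m ∘ g : Q → ℤ exists and equals the pushforward f♯(∂m), i.e., ∂_Q(m ∘ g)(q) = Σ_{p ∈ f⁻¹(q)} ∂_P m(p) for all q ∈ Q. -/
open Finset

/-- Rota's Galois connection theorem, functional form: if `f : P ⇄ Q : g` is a Galois
connection with `P` finite, and `∂m` is the Möbius inversion of `m : P → ℤ`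
(i.e. `m b = Σ_{a ≤ b} ∂m a`), then the pushforward `f♯ ∂m` is a Möbius inversion of
the pullback `m ∘ g`, i.e. `(m ∘ g) q = Σ_{a ≤ q} (f♯ ∂m) a = Σ_{p : f p ≤ q} ∂m p`. -/
theorem stmt_6 {P Q : Type*} [PartialOrder P] [Fintype P]
    [DecidableRel ((· ≤ ·) : P → P → Prop)]
    [PartialOrder Q] [DecidableRel ((· ≤ ·) : Q → Q → Prop)]
    (f : P → Q) (g : Q → P) (hfg : GaloisConnection f g)
    (m : P → ℤ) (dm : P → ℤ)
    (hdm : ∀ b : P, m b = ∑ a ∈ univ.filter (fun a => a ≤ b), dm a) :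
    ∀ q : Q, m (g q) = ∑ p ∈ univ.filter (fun p => f p ≤ q), dm p := by
  intro q
  simp_rw [hdm, hfg.le_iff_le]
end

section
/- Let m : P → ℤ be S-constructible via a Galois insertion α : S ⇄ P : β with m = m' ∘ β, where S is a finite poset. Then the Möbius inversion ∂_P m exists and is given by ∂_P m = α♯(∂_S m'), i.e., m(b) = Σ_{a ≤ b} (α♯ ∂_S m')(a) for all b ∈ P. -/
open Finset

theorem stmt_7_general {S P : Type*} [PartialOrder S] [Fintype S]
    [DecidableRel ((· ≤ ·) : S → S → Prop)]
    [PartialOrder P] [DecidableRel ((· ≤ ·) : P → P → Prop)]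
    (α : S → P) (β : P → S) (hαβ : GaloisConnection α β)
    (m : P → ℤ) (m' : S → ℤ) (hm : m = m' ∘ β) (dm' : S → ℤ)
    (hdm' : ∀ s : S, m' s = ∑ t ∈ univ.filter (fun t => t ≤ s), dm' t) :
    ∀ b : P, m b = ∑ s ∈ univ.filter (fun s => α s ≤ b), dm' s := by
  intro b
  simp only [hm, Function.comp_apply, hdm', hαβ.le_iff_le]

/-- Möbius inversion of a constructible function: if `m = m' ∘ β` for a Galois
insertion `α : S ⇄ P : β` (with `β ∘ α = id_S`) from a finite poset `S`, and `∂m'`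
is the Möbius inversion of `m'`, then the pushforward `α♯ ∂m'` is a Möbius inversion
of `m`, i.e. `m b = Σ_{a ≤ b} (α♯ ∂m')(a) = Σ_{s : α s ≤ b} ∂m' s` for all `b`. -/
theorem stmt_7 {S P : Type*} [PartialOrder S] [Fintype S]
    [DecidableRel ((· ≤ ·) : S → S → Prop)]
    [PartialOrder P] [DecidableRel ((· ≤ ·) : P → P → Prop)]
    (α : S → P) (β : P → S) (hαβ : GaloisConnection α β) (hins : ∀ s, β (α s) = s)
    (m : P → ℤ) (m' : S → ℤ) (hm : m = m' ∘ β) (dm' : S → ℤ)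
    (hdm' : ∀ s : S, m' s = ∑ t ∈ univ.filter (fun t => t ≤ s), dm' t) :
    ∀ b : P, m b = ∑ s ∈ univ.filter (fun s => α s ≤ b), dm' s :=
  stmt_7_general α β hαβ m m' hm dm' hdm'
end

section
/- Rota's classical Galois connection theorem: if f : P ⇄ Q : g is a Galois connection between finite posets, then for any p ∈ P and q ∈ Q, Σ_{v ∈ Q, g(v) = p} μ_Q(v, q) = Σ_{u ∈ P, f(u) = q} μ_P(p, u), where μ_P and μ_Q are the Möbius functions of P and Q. -/
/-!
Work with matrices: the zeta matrices `ζ`, the Möbius matrices `μ`, and the 0/1 graph matrices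
`F`, `G` of `f` and `g`. The hypotheses on `μ` say `μ ζ = 1`, so also `ζ μ = 1` (square matrices).
The Galois connection says exactly that the matrix `[f u ≤ v] = [u ≤ g v]` factors both as
`F ζ_Q` and as `ζ_P Gᵀ`. Hence `Gᵀ μ_Q = μ_P ζ_P Gᵀ μ_Q = μ_P F ζ_Q μ_Q = μ_P F`, and the `(p, q)`
entries of the two ends are the two sums of the theorem.
-/

open Finset Matrix

section Incidence

variable (R : Type*)

def zetaMatrix (P : Type*) [LE P] [DecidableRel ((· ≤ ·) : P → P → Prop)] [Zero R] [One R] :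
    Matrix P P R :=
  Matrix.of fun a b => if a ≤ b then 1 else 0

def graphMatrix {P Q : Type*} [DecidableEq Q] [Zero R] [One R] (f : P → Q) : Matrix P Q R :=
  Matrix.of fun a b => if f a = b then 1 else 0

variable {R} [Semiring R] {P Q : Type*}

theorem graphMatrix_mul_zetaMatrix_apply [LE Q] [Fintype Q] [DecidableEq Q]
    [DecidableRel ((· ≤ ·) : Q → Q → Prop)] (f : P → Q) (u : P) (v : Q) :
    (graphMatrix R f * zetaMatrix R Q) u v = if f u ≤ v then 1 else 0 := by
  simp only [graphMatrix, zetaMatrix, mul_apply, of_apply, ite_mul, one_mul, zero_mul,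
    sum_ite_eq, mem_univ, if_true]

theorem zetaMatrix_mul_graphMatrix_transpose_apply [LE P] [Fintype P] [DecidableEq P]
    [DecidableRel ((· ≤ ·) : P → P → Prop)] (g : Q → P) (u : P) (v : Q) :
    (zetaMatrix R P * (graphMatrix R g)ᵀ) u v = if u ≤ g v then 1 else 0 := by
  simp [graphMatrix, zetaMatrix, mul_apply, mul_ite]

theorem GaloisConnection.graphMatrix_mul_zetaMatrix [Preorder P] [Preorder Q]
    [Fintype P] [Fintype Q] [DecidableEq P] [DecidableEq Q]
    [DecidableRel ((· ≤ ·) : P → P → Prop)] [DecidableRel ((· ≤ ·) : Q → Q → Prop)]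
    {f : P → Q} {g : Q → P} (hfg : GaloisConnection f g) :
    graphMatrix R f * zetaMatrix R Q = zetaMatrix R P * (graphMatrix R g)ᵀ := by
  ext u v
  rw [graphMatrix_mul_zetaMatrix_apply, zetaMatrix_mul_graphMatrix_transpose_apply]
  exact if_congr (hfg u v) rfl rfl

theorem of_mul_zetaMatrix_eq_one [Preorder P] [Fintype P] [DecidableEq P]
    [DecidableRel ((· ≤ ·) : P → P → Prop)] (μ : P → P → R)
    (h0 : ∀ a b : P, ¬ a ≤ b → μ a b = 0)
    (h : ∀ a b : P, a ≤ b →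
      ∑ c ∈ univ.filter (fun c => a ≤ c ∧ c ≤ b), μ a c = if a = b then 1 else 0) :
    Matrix.of μ * zetaMatrix R P = 1 := by
  ext a b
  have hsum : (Matrix.of μ * zetaMatrix R P) a b
      = ∑ c ∈ univ.filter (fun c => a ≤ c ∧ c ≤ b), μ a c := by
    rw [mul_apply, sum_filter]
    refine sum_congr rfl fun c _ => ?_
    by_cases hac : a ≤ c <;> by_cases hcb : c ≤ b <;> simp [zetaMatrix, hac, hcb, h0]
  rw [hsum, one_apply]
  by_cases hab : a ≤ b
  · exact h a b hab
  · rw [if_neg (fun he => hab he.le)]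
    refine sum_eq_zero fun c hc => absurd ?_ hab
    obtain ⟨hac, hcb⟩ := (mem_filter.1 hc).2
    exact hac.trans hcb

end Incidence

/-- Rota's classical Galois connection theorem: for a Galois connection
`f : P ⇄ Q : g` between finite posets and Möbius functions `μP`, `μQ`
(characterized by `μ(a,b) = 0` unless `a ≤ b` and `Σ_{a ≤ c ≤ b} μ(a,c) = δ_{ab}`),
we have `Σ_{v : g v = p} μQ v q = Σ_{u : f u = q} μP p u`. -/
theorem stmt_8 {P Q : Type*} [PartialOrder P] [PartialOrder Q]
    [Fintype P] [Fintype Q] [DecidableEq P] [DecidableEq Q]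
    [DecidableRel ((· ≤ ·) : P → P → Prop)] [DecidableRel ((· ≤ ·) : Q → Q → Prop)]
    (f : P → Q) (g : Q → P) (hfg : GaloisConnection f g)
    (μP : P → P → ℤ) (μQ : Q → Q → ℤ)
    (hμP0 : ∀ a b : P, ¬ a ≤ b → μP a b = 0)
    (hμP : ∀ a b : P, a ≤ b →
      ∑ c ∈ univ.filter (fun c => a ≤ c ∧ c ≤ b), μP a c = if a = b then 1 else 0)
    (hμQ0 : ∀ a b : Q, ¬ a ≤ b → μQ a b = 0)
    (hμQ : ∀ a b : Q, a ≤ b →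
      ∑ c ∈ univ.filter (fun c => a ≤ c ∧ c ≤ b), μQ a c = if a = b then 1 else 0)
    (p : P) (q : Q) :
    ∑ v ∈ univ.filter (fun v => g v = p), μQ v q
      = ∑ u ∈ univ.filter (fun u => f u = q), μP p u := by
  have hP : Matrix.of μP * zetaMatrix ℤ P = 1 := of_mul_zetaMatrix_eq_one μP hμP0 hμP
  have hQ : zetaMatrix ℤ Q * Matrix.of μQ = 1 :=
    mul_eq_one_comm.mp (of_mul_zetaMatrix_eq_one μQ hμQ0 hμQ)
  have hmat : (graphMatrix ℤ g)ᵀ * Matrix.of μQ = Matrix.of μP * graphMatrix ℤ f := by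
    calc (graphMatrix ℤ g)ᵀ * Matrix.of μQ
        = Matrix.of μP * (zetaMatrix ℤ P * (graphMatrix ℤ g)ᵀ) * Matrix.of μQ := by
          rw [← Matrix.mul_assoc, hP, Matrix.one_mul]
      _ = Matrix.of μP * (graphMatrix ℤ f * zetaMatrix ℤ Q) * Matrix.of μQ := by
          rw [hfg.graphMatrix_mul_zetaMatrix]
      _ = Matrix.of μP * graphMatrix ℤ f := by
          rw [Matrix.mul_assoc, Matrix.mul_assoc, hQ, Matrix.mul_one]
  have hpq := congrFun (congrFun hmat p) q
  simpa [mul_apply, graphMatrix, sum_filter, ite_mul, mul_ite] using hpq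
end

section
/- Let M : P → Vec be a persistence module (functor to finite-dimensional vector spaces) with a free presentation φ : F ⇒ M (F free, φ surjective). Then for any a ≤ b in P, dim ker M(a ≤ b) = dim(F(a) ∩ ker φ_b) − dim(F(a) ∩ ker φ_a), where F(a) is regarded as a subspace of F(b) via the (injective) map F(a ≤ b). -/
/-!
Both sides count the kernel of the composite `F(a) → F(b) → M(b)`. Going across the top,
`F(a ≤ b)` is injective, so this kernel is isomorphic to `F(a) ∩ ker φ_b`. Going down first,
naturality rewrites the composite as `M(a ≤ b) ∘ φ_a`, and since `φ_a` is surjective rank–nullity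
splits the dimension of its kernel as `dim ker M(a ≤ b) + dim ker φ_a`.
-/

open CategoryTheory
open scoped Classical

/-- The submodule of `k` which is everything if `a ≤ b` and zero otherwise. -/
noncomputable def upSub (k : Type) [Field k] {P : Type} [PartialOrder P] (a b : P) :
    Submodule k k :=
  if a ≤ b then ⊤ else ⊥

lemma upSub_mono (k : Type) [Field k] {P : Type} [PartialOrder P] (a : P) {b c : P}
    (h : b ≤ c) : upSub k a b ≤ upSub k a c := by
  unfold upSub
  split_ifs with h1 h2
  · exact le_rfl
  · exact absurd (h1.trans h) h2
  · exact bot_le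
  · exact bot_le

/-- The free persistence module `⨁_{i} k^{↑ pts i}` on a finite family of points:
it assigns to `b` the direct sum of the modules `k^{↑ pts i}(b)`, with (injective)
componentwise inclusion maps. -/
noncomputable def freeMod (k : Type) [Field k] (P : Type) [PartialOrder P] {n : ℕ}
    (pts : Fin n → P) : P ⥤ ModuleCat k where
  obj b := ModuleCat.of k (∀ i, upSub k (pts i) b)
  map {b c} h := ModuleCat.ofHom
    (LinearMap.pi fun i =>
      (Submodule.inclusion (upSub_mono k (pts i) (leOfHom h))).comp (LinearMap.proj i))
  map_id b := by ext x : 1; rfl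
  map_comp f g := by ext x : 1; rfl

open Module LinearMap

section LinearAlgebra

variable {K V W U : Type*} [Field K] [AddCommGroup V] [Module K V] [AddCommGroup W] [Module K W]
  [AddCommGroup U] [Module K U]

theorem LinearMap.finrank_ker_comp_of_injective {f : V →ₗ[K] W} (hf : Function.Injective f)
    (g : W →ₗ[K] U) : finrank K (ker (g ∘ₗ f)) = finrank K (range f ⊓ ker g : Submodule K W) := by
  rw [ker_comp, ← Submodule.map_comap_eq]
  exact (Submodule.equivMapOfInjective f hf _).finrank_eq

theorem LinearMap.finrank_ker_comp_of_surjective [FiniteDimensional K V] {φ : V →ₗ[K] W}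
    (hφ : Function.Surjective φ) (m : W →ₗ[K] U) :
    finrank K (ker (m ∘ₗ φ)) = finrank K (ker m) + finrank K (ker φ) := by
  have hrange : range (φ.domRestrict (ker (m ∘ₗ φ))) = ker m := by
    rw [range_domRestrict, ker_comp, Submodule.map_comap_eq, range_eq_top.2 hφ, top_inf_eq]
  have hker : ker (φ.domRestrict (ker (m ∘ₗ φ))) ≃ₗ[K] ker φ := by
    rw [ker_domRestrict]
    exact Submodule.comapSubtypeEquivOfLe (ker_le_ker_comp φ m)
  rw [← (φ.domRestrict _).finrank_range_add_finrank_ker, hrange, hker.finrank_eq]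

theorem finrank_ker_add_finrank_ker_of_comp_eq {V' W' : Type*} [AddCommGroup V'] [Module K V']
    [AddCommGroup W'] [Module K W'] [FiniteDimensional K V] {f : V →ₗ[K] V'} {m : W →ₗ[K] W'}
    {φ : V →ₗ[K] W} {ψ : V' →ₗ[K] W'} (hcomm : ψ ∘ₗ f = m ∘ₗ φ) (hf : Function.Injective f)
    (hφ : Function.Surjective φ) :
    finrank K (ker m) + finrank K (ker φ) = finrank K (range f ⊓ ker ψ : Submodule K V') := by
  rw [← finrank_ker_comp_of_surjective hφ, ← hcomm, finrank_ker_comp_of_injective hf]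

end LinearAlgebra

section FreeModule

variable (k : Type) [Field k] {P : Type} [PartialOrder P] {n : ℕ} (pts : Fin n → P)

instance freeMod.finiteDimensional (b : P) : FiniteDimensional k ((freeMod k P pts).obj b) :=
  inferInstanceAs (FiniteDimensional k (∀ i, upSub k (pts i) b))

theorem freeMod_map_injective {a b : P} (h : a ⟶ b) :
    Function.Injective ((freeMod k P pts).map h).hom := fun _ _ hxy =>
  funext fun i => Submodule.inclusion_injective (upSub_mono k (pts i) (leOfHom h)) (congrFun hxy i)

end FreeModule

/-- For a persistence module `M : P → Vec` with a free presentation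
`φ : F ⇒ M` (`F` a finite direct sum of upset modules, each `φ_b` surjective) and
`a ≤ b` in `P`:
`dim ker M(a ≤ b) = dim(F(a) ∩ ker φ_b) − dim(F(a) ∩ ker φ_a)`, where `F(a)` is
viewed as a subspace of `F(b)` via the injective structure map, so that
`F(a) ∩ ker φ_b = range F(a ≤ b) ⊓ ker φ_b` and `dim(F(a) ∩ ker φ_a) = dim ker φ_a`. -/
theorem stmt_13 {P : Type} [PartialOrder P] (k : Type) [Field k] {n : ℕ}
    (pts : Fin n → P) (M : P ⥤ ModuleCat k) (φ : freeMod k P pts ⟶ M)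
    (hsurj : ∀ b : P, Function.Surjective (φ.app b))
    {a b : P} (h : a ≤ b) :
    (Module.finrank k (LinearMap.ker (M.map (homOfLE h)).hom) : ℤ)
      = (Module.finrank k
          (LinearMap.range ((freeMod k P pts).map (homOfLE h)).hom ⊓
            LinearMap.ker (φ.app b).hom : Submodule k _) : ℤ)
        - Module.finrank k (LinearMap.ker (φ.app a).hom) := by
  have hcomm : (φ.app b).hom ∘ₗ ((freeMod k P pts).map (homOfLE h)).hom
      = (M.map (homOfLE h)).hom ∘ₗ (φ.app a).hom :=
    congrArg ModuleCat.Hom.hom (φ.naturality (homOfLE h))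
  have hdim := finrank_ker_add_finrank_ker_of_comp_eq hcomm (freeMod_map_injective k pts _) (hsurj a)
  omega
end
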